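/- Gradient descent with relative gradient error α ∈ [0,1), step h = (1-α)/(L(1+α)²), on an L-smooth function with μ-PL condition converges linearly: f(x^N) - f* ≤ (1 - (μ/L)·(1-α)²/(1+α)²)^N (f(x^0) - f*). -/

import Mathlib

/-!
With `h = (1 - α) / (L (1 + α)²)`, the descent lemma for the `L`-Lipschitz gradient together with
`⟪∇f, d⟫ ≥ (1 - α)‖∇f‖²` and `‖d‖ ≤ (1 + α)‖∇f‖` for the inexact direction `d` gives the
sufficient decrease `f(x⁺) ≤ f(x) - (1 - α)²/(2L(1 + α)²) ‖∇f(x)‖²`. The PL inequality turns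
`‖∇f(x)‖²` into `2μ (f(x) - f*)`, so the gap contracts by the stated factor at every step.
-/

open RealInnerProductSpace

section InexactGradientDescent

variable {E : Type*} [NormedAddCommGroup E] [InnerProductSpace ℝ E]

theorem one_sub_mul_norm_sq_le_inner_of_norm_sub_le {g d : E} {α : ℝ}
    (h : ‖d - g‖ ≤ α * ‖g‖) : (1 - α) * ‖g‖ ^ 2 ≤ ⟪g, d⟫ := by
  have hcs : -(‖g‖ * ‖d - g‖) ≤ ⟪g, d - g⟫ := neg_le_of_abs_le (abs_real_inner_le_norm _ _)
  calc (1 - α) * ‖g‖ ^ 2 = ‖g‖ ^ 2 - ‖g‖ * (α * ‖g‖) := by ring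
    _ ≤ ‖g‖ ^ 2 - ‖g‖ * ‖d - g‖ := by gcongr
    _ ≤ ‖g‖ ^ 2 + ⟪g, d - g⟫ := by linarith
    _ = ⟪g, d⟫ := by rw [inner_sub_right, real_inner_self_eq_norm_sq]; ring

variable [CompleteSpace E] {f : E → ℝ} {g : E → E} {L : ℝ}

theorem HasGradientAt.hasDerivAt_comp_add_smul {f' x v : E} {t : ℝ}
    (hf : HasGradientAt f f' (x + t • v)) :
    HasDerivAt (fun s : ℝ => f (x + s • v)) ⟪f', v⟫ t := by
  have hline : HasDerivAt (fun s : ℝ => x + s • v) v t := by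
    simpa using ((hasDerivAt_id t).smul_const v).const_add x
  exact (hasGradientAt_iff_hasFDerivAt.mp hf).comp_hasDerivAt t hline

theorem le_add_inner_add_of_lipschitz_gradient (hf : ∀ x, HasGradientAt f (g x) x)
    (hg : ∀ x y, ‖g x - g y‖ ≤ L * ‖x - y‖) (x y : E) :
    f y ≤ f x + ⟪g x, y - x⟫ + L / 2 * ‖y - x‖ ^ 2 := by
  set v := y - x with hv
  set φ : ℝ → ℝ := fun t => f (x + t • v) - t * ⟪g x, v⟫ - L / 2 * t ^ 2 * ‖v‖ ^ 2 with hφ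
  have hφ' : ∀ t, HasDerivAt φ (⟪g (x + t • v) - g x, v⟫ - L * t * ‖v‖ ^ 2) t := by
    intro t
    have hline : HasDerivAt (fun s : ℝ => f (x + s • v)) ⟪g (x + t • v), v⟫ t :=
      (hf _).hasDerivAt_comp_add_smul
    refine ((hline.sub ((hasDerivAt_id t).mul_const _)).sub
      (((hasDerivAt_pow 2 t).const_mul (L / 2)).mul_const (‖v‖ ^ 2))).congr_deriv ?_
    simp only [inner_sub_left]
    ring
  have hinner_le : ∀ t, 0 ≤ t → ⟪g (x + t • v) - g x, v⟫ ≤ L * t * ‖v‖ ^ 2 := by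
    intro t ht
    calc _ ≤ ‖g (x + t • v) - g x‖ * ‖v‖ := real_inner_le_norm _ _
      _ ≤ L * ‖t • v‖ * ‖v‖ := by gcongr; simpa using hg (x + t • v) x
      _ = L * t * ‖v‖ ^ 2 := by rw [norm_smul, Real.norm_of_nonneg ht]; ring
  have hanti : AntitoneOn φ (Set.Ici 0) :=
    antitoneOn_of_hasDerivWithinAt_nonpos (convex_Ici 0)
      (fun t _ => (hφ' t).continuousAt.continuousWithinAt)
      (fun t _ => (hφ' t).hasDerivWithinAt)
      (fun t ht => by
        rw [interior_Ici] at ht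
        linarith [hinner_le t (le_of_lt ht)])
  have h01 := hanti Set.self_mem_Ici (Set.mem_Ici.mpr zero_le_one) zero_le_one
  simp only [hφ, hv, one_smul, add_sub_cancel, zero_smul, add_zero] at h01
  linarith

theorem le_sub_mul_norm_sq_of_inexact_gradient_step (hf : ∀ x, HasGradientAt f (g x) x)
    (hg : ∀ x y, ‖g x - g y‖ ≤ L * ‖x - y‖) (hL : 0 ≤ L) {h α : ℝ} (hh : 0 ≤ h) {x d : E}
    (hd : ‖d - g x‖ ≤ α * ‖g x‖) :
    f (x - h • d) ≤ f x - h * (1 - α - L * h * (1 + α) ^ 2 / 2) * ‖g x‖ ^ 2 := by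
  have hdesc := le_add_inner_add_of_lipschitz_gradient hf hg x (x - h • d)
  rw [sub_sub_cancel_left, inner_neg_right, real_inner_smul_right, norm_neg, norm_smul,
    Real.norm_of_nonneg hh] at hdesc
  have hnorm : ‖d‖ ≤ (1 + α) * ‖g x‖ := by linarith [norm_le_norm_sub_add d (g x)]
  calc f (x - h • d) ≤ f x + -(h * ⟪g x, d⟫) + L / 2 * (h * ‖d‖) ^ 2 := hdesc
    _ ≤ f x + -(h * ((1 - α) * ‖g x‖ ^ 2)) + L / 2 * (h * ((1 + α) * ‖g x‖)) ^ 2 := by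
      gcongr
      exact one_sub_mul_norm_sq_le_inner_of_norm_sub_le hd
    _ = f x - h * (1 - α - L * h * (1 + α) ^ 2 / 2) * ‖g x‖ ^ 2 := by ring

theorem inexact_gradient_step_sufficient_decrease (hf : ∀ x, HasGradientAt f (g x) x)
    (hg : ∀ x y, ‖g x - g y‖ ≤ L * ‖x - y‖) (hL : 0 < L) {α : ℝ} (hα0 : 0 ≤ α) (hα1 : α ≤ 1)
    {x d : E} (hd : ‖d - g x‖ ≤ α * ‖g x‖) :
    f (x - ((1 - α) / (L * (1 + α) ^ 2)) • d)
      ≤ f x - (1 - α) ^ 2 / (2 * L * (1 + α) ^ 2) * ‖g x‖ ^ 2 := by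
  have hstep : 0 ≤ (1 - α) / (L * (1 + α) ^ 2) := div_nonneg (by linarith) (by positivity)
  convert le_sub_mul_norm_sq_of_inexact_gradient_step hf hg hL.le hstep hd using 3
  field_simp
  ring

theorem inexact_gradient_step_contraction_of_PL (hf : ∀ x, HasGradientAt f (g x) x)
    (hg : ∀ x y, ‖g x - g y‖ ≤ L * ‖x - y‖) (hL : 0 < L) {μ α fstar : ℝ} (hμ : 0 < μ)
    (hα0 : 0 ≤ α) (hα1 : α ≤ 1) {x d : E} (hd : ‖d - g x‖ ≤ α * ‖g x‖)
    (hPL : f x - fstar ≤ ‖g x‖ ^ 2 / (2 * μ)) :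
    f (x - ((1 - α) / (L * (1 + α) ^ 2)) • d) - fstar
      ≤ (1 - μ / L * ((1 - α) ^ 2 / (1 + α) ^ 2)) * (f x - fstar) := by
  have hdec := inexact_gradient_step_sufficient_decrease hf hg hL hα0 hα1 hd
  rw [le_div_iff₀ (by positivity)] at hPL
  have hc : 0 ≤ (1 - α) ^ 2 / (2 * L * (1 + α) ^ 2) := by positivity
  calc _ ≤ f x - fstar - (1 - α) ^ 2 / (2 * L * (1 + α) ^ 2) * ((f x - fstar) * (2 * μ)) := by
        linarith [mul_le_mul_of_nonneg_left hPL hc]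
    _ = (1 - μ / L * ((1 - α) ^ 2 / (1 + α) ^ 2)) * (f x - fstar) := by
        field_simp

end InexactGradientDescent

theorem one_sub_div_mul_sq_div_sq_nonneg {L μ α : ℝ} (hL : 0 < L) (hμL : μ ≤ L) (hα : 0 ≤ α) :
    0 ≤ 1 - μ / L * ((1 - α) ^ 2 / (1 + α) ^ 2) := by
  have hsq : (1 - α) ^ 2 / (1 + α) ^ 2 ≤ 1 := by
    rw [div_le_one (by positivity)]
    nlinarith
  linarith [mul_le_one₀ (div_le_one_of_le₀ hμL hL.le) (by positivity) hsq]

theorem relative_error_gradient_descent_PL_rate_general {n : ℕ}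
    (f : EuclideanSpace ℝ (Fin n) → ℝ)
    (g gt : EuclideanSpace ℝ (Fin n) → EuclideanSpace ℝ (Fin n)) (L μ α fstar : ℝ)
    (hL : 0 < L) (hμ : 0 < μ) (hμL : μ ≤ L) (hα0 : 0 ≤ α) (hα1 : α < 1)
    (hgrad : ∀ x, HasGradientAt f (g x) x)
    (hLip : ∀ x y, ‖g x - g y‖ ≤ L * ‖x - y‖)
    (herr : ∀ x, ‖gt x - g x‖ ≤ α * ‖g x‖)
    (hPL : ∀ x, f x - fstar ≤ ‖g x‖ ^ 2 / (2 * μ))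
    (x : ℕ → EuclideanSpace ℝ (Fin n))
    (hstep : ∀ k, x (k + 1) = x k - ((1 - α) / (L * (1 + α) ^ 2)) • gt (x k)) :
    ∀ N, f (x N) - fstar
      ≤ (1 - μ / L * ((1 - α) ^ 2 / (1 + α) ^ 2)) ^ N * (f (x 0) - fstar) := by
  intro N
  refine le_geom (u := fun k => f (x k) - fstar) (one_sub_div_mul_sq_div_sq_nonneg hL hμL hα0) N
    fun k _ => ?_
  rw [hstep k]
  exact inexact_gradient_step_contraction_of_PL hgrad hLip hL hμ hα0 hα1.le (herr (x k))
    (hPL (x k))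

/-- Gradient descent with relative gradient error `α ∈ [0,1)` and step
`h = (1-α)/(L(1+α)²)` on an `L`-smooth function with the `μ`-PL condition
converges linearly:
`f(x^N) - f* ≤ (1 - (μ/L)(1-α)²/(1+α)²)^N (f(x⁰) - f*)`. -/
theorem relative_error_gradient_descent_PL_rate {n : ℕ}
    (f : EuclideanSpace ℝ (Fin n) → ℝ)
    (g gt : EuclideanSpace ℝ (Fin n) → EuclideanSpace ℝ (Fin n)) (L μ α fstar : ℝ)
    (hL : 0 < L) (hμ : 0 < μ) (hμL : μ ≤ L) (hα0 : 0 ≤ α) (hα1 : α < 1)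
    (hgrad : ∀ x, HasGradientAt f (g x) x)
    (hLip : ∀ x y, ‖g x - g y‖ ≤ L * ‖x - y‖)
    (herr : ∀ x, ‖gt x - g x‖ ≤ α * ‖g x‖)
    (hPL : ∀ x, f x - fstar ≤ ‖g x‖ ^ 2 / (2 * μ))
    (hlb : ∀ x, fstar ≤ f x)
    (x : ℕ → EuclideanSpace ℝ (Fin n))
    (hstep : ∀ k, x (k + 1) = x k - ((1 - α) / (L * (1 + α) ^ 2)) • gt (x k)) :
    ∀ N, f (x N) - fstar
      ≤ (1 - μ / L * ((1 - α) ^ 2 / (1 + α) ^ 2)) ^ N * (f (x 0) - fstar) :=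
  relative_error_gradient_descent_PL_rate_general f g gt L μ α fstar hL hμ hμL hα0 hα1 hgrad hLip
    herr hPL x hstep
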